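/- Let X be a real Hilbert space, let m ≥ 2, and on the Hilbert product space X^m let R be the cyclic right-shift operator and M := Id − R. Define N := Σ_{k=1}^m ((m − (2k − 1))/(2m)) R^{k−1}. Then N is the Moore–Penrose inverse of M, i.e. M N M = M, N M N = N, (M N)* = M N, and (N M)* = N M. -/

import Mathlib

open Filter Topology RealInnerProductSpace

instance piLp_completeSpace {ι : Type*} {p : ENNReal} {α : ι → Type*} [∀ i, UniformSpace (α i)]
    [∀ i, CompleteSpace (α i)] : CompleteSpace (PiLp p α) :=
  (inferInstance : CompleteSpace (PiLp p α))

open Fin.NatCast Fin.CommRing in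
set_option maxHeartbeats 1000000 in
set_option synthInstance.maxHeartbeats 200000 in
theorem moore_penrose_inverse_of_M
    {X : Type*} [NormedAddCommGroup X] [InnerProductSpace ℝ X] [CompleteSpace X]
    {m : ℕ} (hm : 2 ≤ m)
    (R M N : PiLp 2 (fun _ : Fin m => X) →L[ℝ] PiLp 2 (fun _ : Fin m => X))
    (hR : ∀ x : PiLp 2 (fun _ : Fin m => X), ∀ i : Fin m, R x i = x (i - ⟨1, by omega⟩))
    (hM : M = 1 - R)
    (hN : N = ∑ k ∈ Finset.range m, (((m : ℝ) - (2 * k + 1)) / (2 * m)) • R ^ k) :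
    M * N * M = M ∧ N * M * N = N ∧
      ContinuousLinearMap.adjoint (M * N) = M * N ∧
      ContinuousLinearMap.adjoint (N * M) = N * M := by
  haveI : NeZero m := ⟨by omega⟩
  have hm0 : (m : ℝ) ≠ 0 := by
    exact (Nat.cast_pos.mpr (by omega : 0 < m)).ne'
  have hsmul_mul : ∀ (c : ℝ) (f g : PiLp 2 (fun _ : Fin m => X) →L[ℝ]
      PiLp 2 (fun _ : Fin m => X)), (c • f) * g = c • (f * g) := by
    intro c f g
    rw [ContinuousLinearMap.mul_def, ContinuousLinearMap.mul_def,
      ContinuousLinearMap.smul_comp]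
  have hmul_smul : ∀ (c : ℝ) (f g : PiLp 2 (fun _ : Fin m => X) →L[ℝ]
      PiLp 2 (fun _ : Fin m => X)), f * (c • g) = c • (f * g) := by
    intro c f g
    rw [ContinuousLinearMap.mul_def, ContinuousLinearMap.mul_def,
      ContinuousLinearMap.comp_smul]
  have hone : (⟨1, by omega⟩ : Fin m) = 1 := by
    ext
    simp [Fin.val_one, Nat.mod_eq_of_lt (by omega : 1 < m)]
  have hR1 : ∀ (x : PiLp 2 (fun _ : Fin m => X)) (i : Fin m), R x i = x (i - 1) := by
    intro x i; rw [hR x i, hone]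
  have hRpow : ∀ (k : ℕ) (x : PiLp 2 (fun _ : Fin m => X)) (i : Fin m),
      (R ^ k) x i = x (i - (k : Fin m)) := by
    intro k
    induction k with
    | zero =>
      intro x i
      rw [pow_zero, ContinuousLinearMap.one_apply, Nat.cast_zero, sub_zero]
    | succ k ih =>
      intro x i
      rw [pow_succ, ContinuousLinearMap.mul_apply, ih, hR1]
      refine congrArg (WithLp.ofLp x) ?_
      push_cast
      ring
  have hRm : R ^ m = 1 := by
    ext x i
    rw [hRpow, Fin.natCast_self, sub_zero, ContinuousLinearMap.one_apply]
  set S : PiLp 2 (fun _ : Fin m => X) →L[ℝ] PiLp 2 (fun _ : Fin m => X) :=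
    ∑ k ∈ Finset.range m, R ^ k with hS
  have hSapply : ∀ (x : PiLp 2 (fun _ : Fin m => X)) (i : Fin m), S x i = ∑ j : Fin m, x j := by
    intro x i
    have h1 : S x i = ∑ k ∈ Finset.range m, (R ^ k) x i := by
      rw [hS, ContinuousLinearMap.sum_apply]
      rw [WithLp.ofLp_sum]
      exact Finset.sum_apply i (Finset.range m) _
    rw [h1]
    have h2 : ∀ k ∈ Finset.range m, (R ^ k) x i = x (i - (k : Fin m)) := fun k _ => hRpow k x i
    rw [Finset.sum_congr rfl h2,
      ← Fin.sum_univ_eq_sum_range (fun k => x (i - (k : Fin m))) m]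
    exact Fintype.sum_equiv (Equiv.subLeft i) _ _
      (fun j => by rw [Equiv.subLeft_apply, Fin.cast_val_eq_self])
  have hRS : R * S = S := by
    ext x i
    rw [ContinuousLinearMap.mul_apply, hR1, hSapply, hSapply]
  have hSR : S * R = S := by
    ext x i
    rw [ContinuousLinearMap.mul_apply, hSapply, hSapply]
    exact Fintype.sum_equiv (Equiv.subRight (1 : Fin m)) _ _
      (fun j => by rw [hR1, Equiv.subRight_apply])
  have hSRpow : ∀ k : ℕ, S * R ^ k = S := by
    intro k
    induction k with
    | zero => simp
    | succ k ih => rw [pow_succ, ← mul_assoc, ih, hSR]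
  -- S is self-adjoint
  have hadjS : ContinuousLinearMap.adjoint S = S := by
    symm
    rw [ContinuousLinearMap.eq_adjoint_iff]
    intro x y
    simp only [PiLp.inner_apply, hSapply, sum_inner, inner_sum]
    exact Finset.sum_comm
  -- decomposition of N
  set T : PiLp 2 (fun _ : Fin m => X) →L[ℝ] PiLp 2 (fun _ : Fin m => X) :=
    ∑ k ∈ Finset.range m, (k : ℝ) • R ^ k with hT
  have hNdec : N = (((m : ℝ) - 1) / (2 * m)) • S - (1 / (m : ℝ)) • T := by
    rw [hN, hS, hT, Finset.smul_sum, Finset.smul_sum, ← Finset.sum_sub_distrib]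
    refine Finset.sum_congr rfl fun k _ => ?_
    rw [smul_smul, ← sub_smul]
    congr 1
    field_simp
    ring
  -- telescoping: T - T * R = S - m • 1
  have hTR : T - T * R = S - (m : ℝ) • 1 := by
    have h1 : T * R = ∑ k ∈ Finset.range m, (k : ℝ) • R ^ (k + 1) := by
      rw [hT, Finset.sum_mul]
      exact Finset.sum_congr rfl fun k _ => by rw [hsmul_mul, ← pow_succ]
    rw [h1, hT, ← Finset.sum_sub_distrib]
    have h2 : ∀ k ∈ Finset.range m,
        (k : ℝ) • R ^ k - (k : ℝ) • R ^ (k + 1)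
          = (((k : ℕ) : ℝ) • R ^ k - (((k + 1 : ℕ)) : ℝ) • R ^ (k + 1)) + R ^ (k + 1) := by
      intro k _
      push_cast
      module
    rw [Finset.sum_congr rfl h2, Finset.sum_add_distrib,
      Finset.sum_range_sub' (fun k => ((k : ℕ) : ℝ) • R ^ k)]
    have h3 : ∑ k ∈ Finset.range m, R ^ (k + 1) = S := by
      have h4 : ∑ k ∈ Finset.range m, R ^ (k + 1) = R * S := by
        rw [hS, Finset.mul_sum]
        exact Finset.sum_congr rfl fun k _ => pow_succ' R k
      rw [h4, hRS]
    rw [h3, hRm, Nat.cast_zero]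
    module
  -- N * M = 1 - (1/m) • S
  have hNM : N * M = 1 - (1 / (m : ℝ)) • S := by
    have e1 : ((((m : ℝ) - 1) / (2 * m)) • S) * (1 - R) = 0 := by
      rw [hsmul_mul, mul_sub, mul_one, hSR, sub_self, smul_zero]
    have e2 : ((1 / (m : ℝ)) • T) * (1 - R) = (1 / (m : ℝ)) • (T - T * R) := by
      rw [hsmul_mul, mul_sub, mul_one]
    rw [hNdec, hM, sub_mul, e1, e2, hTR, zero_sub, smul_sub, smul_smul, one_div,
      inv_mul_cancel₀ hm0, one_smul]
    module
  have hRN : R * N = N * R := by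
    rw [hN, Finset.mul_sum, Finset.sum_mul]
    refine Finset.sum_congr rfl fun k _ => ?_
    rw [hmul_smul, hsmul_mul, ← pow_succ, ← pow_succ']
  have hMN : M * N = N * M := by
    rw [hM, sub_mul, mul_sub, one_mul, mul_one, hRN]
  have hSM : S * M = 0 := by
    rw [hM, mul_sub, mul_one, hSR, sub_self]
  have hcsum : ∑ k ∈ Finset.range m, ((m : ℝ) - (2 * k + 1)) / (2 * m) = 0 := by
    rw [← Finset.sum_div]
    have hg : (∑ i ∈ Finset.range m, (i : ℝ)) * 2 = (m : ℝ) * ((m : ℝ) - 1) := by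
      have h := congrArg (Nat.cast : ℕ → ℝ) (Finset.sum_range_id_mul_two m)
      push_cast [Nat.cast_sub (by omega : 1 ≤ m)] at h
      simpa using h
    have h0 : ∑ k ∈ Finset.range m, ((m : ℝ) - (2 * k + 1)) = 0 := by
      rw [Finset.sum_sub_distrib, Finset.sum_const, Finset.card_range]
      simp only [nsmul_eq_mul, Finset.sum_add_distrib, Finset.sum_const, Finset.card_range,
        ← Finset.mul_sum]
      nlinarith [hg]
    rw [h0, zero_div]
  have hSN : S * N = 0 := by
    rw [hN, Finset.mul_sum]
    have h5 : ∀ k ∈ Finset.range m,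
        S * ((((m : ℝ) - (2 * k + 1)) / (2 * m)) • R ^ k)
          = (((m : ℝ) - (2 * k + 1)) / (2 * m)) • S := by
      intro k _
      rw [hmul_smul, hSRpow]
    rw [Finset.sum_congr rfl h5, ← Finset.sum_smul, hcsum, zero_smul]
  have hadjG : ContinuousLinearMap.adjoint ((1 : PiLp 2 (fun _ : Fin m => X) →L[ℝ]
      PiLp 2 (fun _ : Fin m => X)) - (1 / (m : ℝ)) • S) = 1 - (1 / (m : ℝ)) • S := by
    rw [map_sub, map_smulₛₗ, hadjS, ContinuousLinearMap.one_def,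
      ContinuousLinearMap.adjoint_id, starRingEnd_apply]
    simp
  refine ⟨?_, ?_, ?_, ?_⟩
  · rw [hMN, hNM, sub_mul, one_mul, hsmul_mul, hSM]
    rw [show ∀ c : ℝ, c • (0 : PiLp 2 (fun _ : Fin m => X) →L[ℝ]
      PiLp 2 (fun _ : Fin m => X)) = 0 from fun c => by ext x; simp, sub_zero]
  · rw [hNM, sub_mul, one_mul, hsmul_mul, hSN]
    rw [show ∀ c : ℝ, c • (0 : PiLp 2 (fun _ : Fin m => X) →L[ℝ]
      PiLp 2 (fun _ : Fin m => X)) = 0 from fun c => by ext x; simp, sub_zero]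
  · rw [hMN, hNM, hadjG]
  · rw [hNM, hadjG]
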